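/- Let Σ = {u = 0} be a regular surface in the Heisenberg group and γ : [a,b] → Σ a Euclidean C²-smooth regular curve through non-characteristic points. If ω(γ̇(t)) ≠ 0, then the limit as L → +∞ of the signed geodesic curvature k^{L,∇,s}_{γ,Σ}(t) associated to the first Schouten–Van Kampen affine connection exists and equals (p̄(γ(t))γ̇₁(t) + q̄(γ(t))γ̇₂(t)) / (2|ω(γ̇(t))|). -/
import Mathlib

open Filter Real Topology

private lemma sqrt_tendsto_atTop : Filter.Tendsto Real.sqrt Filter.atTop Filter.atTop := by
  refine tendsto_atTop_atTop.mpr fun b => ⟨b ^ 2, fun x hx => ?_⟩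
  calc b ≤ |b| := le_abs_self b
    _ = Real.sqrt (b ^ 2) := (Real.sqrt_sq_eq_abs b).symm
    _ ≤ Real.sqrt x := Real.sqrt_le_sqrt hx

private lemma aux_tendsto (pv qv z l P Q d1 d2 g1 g2 w dw : ℝ)
    (hl : l = Real.sqrt (pv ^ 2 + qv ^ 2)) (hlne : l ≠ 0) (hw : w ≠ 0) :
    Filter.Tendsto (fun L : ℝ =>
      ((z / Real.sqrt L / Real.sqrt (pv ^ 2 + qv ^ 2 + (z / Real.sqrt L) ^ 2) * P *
            (g1 + L * w * d2 / 2)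
          + z / Real.sqrt L / Real.sqrt (pv ^ 2 + qv ^ 2 + (z / Real.sqrt L) ^ 2) * Q *
            (g2 - L * w * d1 / 2)
          - l / Real.sqrt (pv ^ 2 + qv ^ 2 + (z / Real.sqrt L) ^ 2) * Real.sqrt L * dw) *
          (Q * d1 - P * d2)
        - (Q * (g1 + L * w * d2 / 2) - P * (g2 - L * w * d1 / 2)) *
          (z / Real.sqrt L / Real.sqrt (pv ^ 2 + qv ^ 2 + (z / Real.sqrt L) ^ 2) *
              (P * d1 + Q * d2)
            - l / Real.sqrt (pv ^ 2 + qv ^ 2 + (z / Real.sqrt L) ^ 2) * Real.sqrt L * w))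
      / Real.sqrt ((d1 ^ 2 + d2 ^ 2 + L * w ^ 2) ^ 3)) Filter.atTop
      (nhds ((P * d1 + Q * d2) / (2 * |w|))) := by
  have hlnn : 0 ≤ l := hl ▸ Real.sqrt_nonneg _
  have hlpos : 0 < l := lt_of_le_of_ne hlnn (Ne.symm hlne)
  have hpq : pv ^ 2 + qv ^ 2 = l ^ 2 := by
    rw [hl, Real.sq_sqrt (by positivity)]
  have hpqpos : 0 < pv ^ 2 + qv ^ 2 := by rw [hpq]; positivity
  have hwabs : 0 < |w| := abs_pos.mpr hw
  have hw2 : 0 < w ^ 2 := by rw [← sq_abs]; exact pow_pos hwabs 2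
  set K1 := (Q * d1 - P * d2) * z * (P * g1 + Q * g2) - (Q * g1 - P * g2) * z * (P * d1 + Q * d2)
    with hK1
  set K2 := (Q * d1 - P * d2) * (z * w * (P * d2 - Q * d1) / 2 - l * dw)
      + (Q * g1 - P * g2) * l * w - z * w * (P * d1 + Q * d2) ^ 2 / 2 with hK2
  set K3 := l * w ^ 2 * (P * d1 + Q * d2) / 2 with hK3
  set G := fun e : ℝ => (K1 * e ^ 4 + K2 * e ^ 2 + K3) /
      (Real.sqrt (pv ^ 2 + qv ^ 2 + (z * e) ^ 2) *
        Real.sqrt (((d1 ^ 2 + d2 ^ 2) * e ^ 2 + w ^ 2) ^ 3)) with hG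
  have hG0 : G 0 = (P * d1 + Q * d2) / (2 * |w|) := by
    have h1 : Real.sqrt (pv ^ 2 + qv ^ 2 + (z * 0) ^ 2) = l := by
      rw [mul_zero]; norm_num [← hl]
    have h2 : Real.sqrt (((d1 ^ 2 + d2 ^ 2) * 0 ^ 2 + w ^ 2) ^ 3) = |w| ^ 3 := by
      rw [show ((d1 ^ 2 + d2 ^ 2) * 0 ^ 2 + w ^ 2) ^ 3 = (w ^ 3) ^ 2 by ring,
        Real.sqrt_sq_eq_abs, abs_pow]
    rw [hG]
    simp only
    rw [h1, h2, hK3]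
    have hww : w ^ 2 = |w| ^ 2 := (sq_abs w).symm
    field_simp
    rw [hww]
    ring
  have hcont : ContinuousAt G 0 := by
    apply ContinuousAt.div
    · fun_prop
    · fun_prop
    · have h1 : (0:ℝ) < pv ^ 2 + qv ^ 2 + (z * 0) ^ 2 := by
        rw [mul_zero]; simpa using hpqpos
      have h2 : (0:ℝ) < ((d1 ^ 2 + d2 ^ 2) * 0 ^ 2 + w ^ 2) ^ 3 := by
        rw [zero_pow, mul_zero, zero_add] <;> positivity
      exact ne_of_gt (mul_pos (Real.sqrt_pos.mpr h1) (Real.sqrt_pos.mpr h2))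
  have hinv : Filter.Tendsto (fun L : ℝ => (Real.sqrt L)⁻¹) Filter.atTop (nhds 0) :=
    sqrt_tendsto_atTop.inv_tendsto_atTop
  have hcomp : Filter.Tendsto (fun L : ℝ => G ((Real.sqrt L)⁻¹)) Filter.atTop
      (nhds ((P * d1 + Q * d2) / (2 * |w|))) := by
    rw [← hG0]
    exact hcont.tendsto.comp hinv
  refine hcomp.congr' ?_
  filter_upwards [eventually_ge_atTop (1:ℝ)] with L hL
  have hLpos : (0:ℝ) < L := lt_of_lt_of_le one_pos hL
  have hsL : 0 < Real.sqrt L := Real.sqrt_pos.mpr hLpos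
  set e := (Real.sqrt L)⁻¹ with hedef
  have hepos : 0 < e := inv_pos.mpr hsL
  have hsLe : Real.sqrt L = e⁻¹ := by rw [hedef, inv_inv]
  have hLval : L = (e⁻¹) ^ 2 := by rw [← hsLe, Real.sq_sqrt hLpos.le]
  have hz : z / Real.sqrt L = z * e := by rw [hedef, div_eq_mul_inv]
  have hLw : 0 < L * w ^ 2 := mul_pos hLpos hw2
  have hM : (0:ℝ) < d1 ^ 2 + d2 ^ 2 + L * w ^ 2 :=
    add_pos_of_nonneg_of_pos (by positivity) hLw
  have hLe : L * e ^ 2 = 1 := by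
    rw [hLval]; field_simp
  have hMe : (d1 ^ 2 + d2 ^ 2) * e ^ 2 + w ^ 2 = (d1 ^ 2 + d2 ^ 2 + L * w ^ 2) * e ^ 2 := by
    linear_combination (-(w ^ 2)) * hLe
  have hsqrtM : Real.sqrt (((d1 ^ 2 + d2 ^ 2) * e ^ 2 + w ^ 2) ^ 3)
      = e ^ 3 * Real.sqrt ((d1 ^ 2 + d2 ^ 2 + L * w ^ 2) ^ 3) := by
    rw [hMe, mul_pow, show ((d1 ^ 2 + d2 ^ 2 + L * w ^ 2) ^ 3 * (e ^ 2) ^ 3)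
        = (d1 ^ 2 + d2 ^ 2 + L * w ^ 2) ^ 3 * (e ^ 3) ^ 2 by ring,
      Real.sqrt_mul (by positivity), Real.sqrt_sq (by positivity)]
    ring
  have hRpos : 0 < Real.sqrt ((d1 ^ 2 + d2 ^ 2 + L * w ^ 2) ^ 3) :=
    Real.sqrt_pos.mpr (by positivity)
  rw [hG]
  simp only
  rw [hsqrtM, hz]
  set R := Real.sqrt ((d1 ^ 2 + d2 ^ 2 + L * w ^ 2) ^ 3) with hR
  set lLv := Real.sqrt (pv ^ 2 + qv ^ 2 + (z * e) ^ 2) with hlLv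
  have hlLpos : 0 < lLv := Real.sqrt_pos.mpr (by positivity)
  rw [hsLe, hLval, hK1, hK2, hK3]
  field_simp
  ring

theorem signed_geodesic_curvature_limit_first_SvK_nonhorizontal
    (u : ℝ → ℝ → ℝ → ℝ)
    (γ₁ γ₂ γ₃ ω p q uz lf pbar qbar c1 : ℝ → ℝ)
    (rr lL rbar c2 aa bb k : ℝ → ℝ → ℝ)
    (a b t : ℝ) (ht : t ∈ Set.Icc a b)
    (hu : ContDiff ℝ 2 (fun v : ℝ × ℝ × ℝ => u v.1 v.2.1 v.2.2))
    (hγ : ContDiffOn ℝ 2 (fun s => (γ₁ s, γ₂ s, γ₃ s)) (Set.Icc a b))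
    (hreg : ∀ s ∈ Set.Icc a b, ¬ (deriv γ₁ s = 0 ∧ deriv γ₂ s = 0 ∧ deriv γ₃ s = 0))
    (hSurf : ∀ s ∈ Set.Icc a b, u (γ₁ s) (γ₂ s) (γ₃ s) = 0)
    (hω : ∀ s, ω s = deriv γ₃ s + (1/2) * (γ₂ s * deriv γ₁ s - γ₁ s * deriv γ₂ s))
    (hp : ∀ s, p s = deriv (fun x => u x (γ₂ s) (γ₃ s)) (γ₁ s)
        - (γ₂ s / 2) * deriv (fun z => u (γ₁ s) (γ₂ s) z) (γ₃ s))
    (hq : ∀ s, q s = deriv (fun y => u (γ₁ s) y (γ₃ s)) (γ₂ s)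
        + (γ₁ s / 2) * deriv (fun z => u (γ₁ s) (γ₂ s) z) (γ₃ s))
    (huz : ∀ s, uz s = deriv (fun z => u (γ₁ s) (γ₂ s) z) (γ₃ s))
    (hl : ∀ s, lf s = Real.sqrt (p s ^ 2 + q s ^ 2))
    (hnc : ∀ s ∈ Set.Icc a b, lf s ≠ 0)
    (hpbar : ∀ s, pbar s = p s / lf s)
    (hqbar : ∀ s, qbar s = q s / lf s)
    (hrr : ∀ L s, rr L s = uz s / Real.sqrt L)
    (hlL : ∀ L s, lL L s = Real.sqrt (p s ^ 2 + q s ^ 2 + rr L s ^ 2))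
    (hrbar : ∀ L s, rbar L s = rr L s / lL L s)
    (hc1 : ∀ s, c1 s = qbar s * deriv γ₁ s - pbar s * deriv γ₂ s)
    (hc2 : ∀ L s, c2 L s = rbar L s * (pbar s * deriv γ₁ s + qbar s * deriv γ₂ s)
        - (lf s / lL L s) * Real.sqrt L * ω s)
    (haa : ∀ L s, aa L s = qbar s * (deriv (deriv γ₁) s + L * ω s * deriv γ₂ s / 2) - pbar s * (deriv (deriv γ₂) s - L * ω s * deriv γ₁ s / 2))
    (hbb : ∀ L s, bb L s = rbar L s * pbar s * (deriv (deriv γ₁) s + L * ω s * deriv γ₂ s / 2) + rbar L s * qbar s * (deriv (deriv γ₂) s - L * ω s * deriv γ₁ s / 2) - (lf s / lL L s) * Real.sqrt L * deriv ω s)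
    (hk : ∀ L s, k L s = (bb L s * c1 s - aa L s * c2 L s) / Real.sqrt (((deriv γ₁ s)^2 + (deriv γ₂ s)^2 + L * (ω s)^2)^3))
    (h0 : ω t ≠ 0) :
    Filter.Tendsto (fun L => k L t) Filter.atTop
      (nhds ((pbar t * deriv γ₁ t + qbar t * deriv γ₂ t) / (2 * |ω t|))) := by
  refine (aux_tendsto (p t) (q t) (uz t) (lf t) (pbar t) (qbar t)
      (deriv γ₁ t) (deriv γ₂ t) (deriv (deriv γ₁) t) (deriv (deriv γ₂) t)
      (ω t) (deriv ω t) (hl t) (hnc t ht) h0).congr fun L => ?_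
  rw [hk L t, hbb L t, haa L t, hc2 L t, hc1 t, hrbar L t, hlL L t, hrr L t]
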